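/- arXiv:1112.3703 — 2 statements merged into one kernel-verified Lean document; each statement's English description precedes it below -/
import Mathlib

section
/- Let v, f be positive weights on an interval I = (r₀, ∞) with 1/v, 1/f ∈ L¹(+∞). If v/f is non-increasing on I, then χ(r) ≤ χ_f(r) on I; if v/f is non-decreasing on I, then χ(r) ≥ χ_f(r) on I. -/
open MeasureTheory Set Real

lemma intpos_aux (r : ℝ) (w : ℝ → ℝ) (hw : ∀ s ∈ Ioi r, 0 < w s)
    (hi : IntegrableOn (fun s => 1 / w s) (Ioi r)) :
    0 < ∫ s in Ioi r, 1 / w s := by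
  rw [setIntegral_pos_iff_support_of_nonneg_ae _ hi]
  · have hsub : Ioi r ⊆ Function.support (fun s => 1 / w s) ∩ Ioi r := by
      intro s hs
      exact ⟨by simp [Function.mem_support, ne_of_gt (hw s hs)], hs⟩
    have := measure_mono (μ := volume) hsub
    simpa using lt_of_lt_of_le (by simp) this
  · filter_upwards [ae_restrict_mem measurableSet_Ioi] with s hs
    have := hw s hs; positivity

lemma key_aux (r : ℝ) (v f : ℝ → ℝ) (hvr : 0 < v r) (hfr : 0 < f r)
    (hv : ∀ s ∈ Ioi r, 0 < v s) (hf : ∀ s ∈ Ioi r, 0 < f s)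
    (hiv : IntegrableOn (fun s => 1 / v s) (Ioi r))
    (hif : IntegrableOn (fun s => 1 / f s) (Ioi r))
    (h : ∀ s ∈ Ioi r, f r * (1 / f s) ≤ v r * (1 / v s)) :
    ((2 * v r * ∫ s in Ioi r, 1 / v s)⁻¹) ^ 2 ≤ ((2 * f r * ∫ s in Ioi r, 1 / f s)⁻¹) ^ 2 := by
  have hIf : 0 < ∫ s in Ioi r, 1 / f s := intpos_aux r f hf hif
  have hmono : f r * ∫ s in Ioi r, 1 / f s ≤ v r * ∫ s in Ioi r, 1 / v s := by
    rw [← integral_const_mul, ← integral_const_mul]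
    exact setIntegral_mono_on (hif.const_mul _) (hiv.const_mul _) measurableSet_Ioi h
  have h1 : 0 < 2 * f r * ∫ s in Ioi r, 1 / f s := by positivity
  have h2 : 2 * f r * ∫ s in Ioi r, 1 / f s ≤ 2 * v r * ∫ s in Ioi r, 1 / v s := by
    rw [mul_assoc, mul_assoc]
    linarith
  have := inv_anti₀ h1 h2
  have hnn : 0 ≤ (2 * v r * ∫ s in Ioi r, 1 / v s)⁻¹ := by
    apply inv_nonneg.2; linarith
  exact pow_le_pow_left₀ hnn this 2

theorem stmt_3 (r₀ : ℝ) (v f : ℝ → ℝ)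
    (hv : ∀ r ∈ Ioi r₀, 0 < v r) (hf : ∀ r ∈ Ioi r₀, 0 < f r)
    (hintv : ∀ r ∈ Ioi r₀, IntegrableOn (fun s => 1 / v s) (Ioi r))
    (hintf : ∀ r ∈ Ioi r₀, IntegrableOn (fun s => 1 / f s) (Ioi r))
    (χv χf : ℝ → ℝ)
    (hχv : ∀ r ∈ Ioi r₀, χv r = ((2 * v r * ∫ s in Ioi r, 1 / v s)⁻¹) ^ 2)
    (hχf : ∀ r ∈ Ioi r₀, χf r = ((2 * f r * ∫ s in Ioi r, 1 / f s)⁻¹) ^ 2) :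
    (AntitoneOn (fun r => v r / f r) (Ioi r₀) → ∀ r ∈ Ioi r₀, χv r ≤ χf r) ∧
    (MonotoneOn (fun r => v r / f r) (Ioi r₀) → ∀ r ∈ Ioi r₀, χv r ≥ χf r) := by
  have hsub : ∀ r ∈ Ioi r₀, Ioi r ⊆ Ioi r₀ := fun r hr => Ioi_subset_Ioi (le_of_lt hr)
  constructor
  · intro hanti r hr
    rw [hχv r hr, hχf r hr]
    apply key_aux r v f (hv r hr) (hf r hr) (fun s hs => hv s (hsub r hr hs))
      (fun s hs => hf s (hsub r hr hs)) (hintv r hr) (hintf r hr)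
    intro s hs
    have hs' := hsub r hr hs
    have h1 := hanti hr hs' (le_of_lt hs)
    simp only at h1
    have hfs := hf s hs'
    have hvs := hv s hs'
    have hfr := hf r hr
    have hvr := hv r hr
    rw [div_le_div_iff₀ hfs hfr] at h1
    rw [mul_one_div, mul_one_div, div_le_div_iff₀ hfs hvs]
    nlinarith
  · intro hmono r hr
    rw [ge_iff_le, hχv r hr, hχf r hr]
    apply key_aux r f v (hf r hr) (hv r hr) (fun s hs => hf s (hsub r hr hs))
      (fun s hs => hv s (hsub r hr hs)) (hintf r hr) (hintv r hr)
    intro s hs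
    have hs' := hsub r hr hs
    have h1 := hmono hr hs' (le_of_lt hs)
    simp only at h1
    have hfs := hf s hs'
    have hvs := hv s hs'
    have hfr := hf r hr
    have hvr := hv r hr
    rw [div_le_div_iff₀ hfr hfs] at h1
    rw [mul_one_div, mul_one_div, div_le_div_iff₀ hvs hfs]
    nlinarith
end

section
/- Suppose g : [0,∞) → ℝ is C², g(0) = 0, g'(0) = 1, and g'' + K g ≥ 0 where K(t) ≤ 1/(4(1+t)²) on (0,∞). Then g > 0 on (0,∞). (Sturm comparison with w(t) = √(1+t) log(1+t).) -/
/-!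
Sturm comparison with `w(t) = √(1+t) log(1+t)`, which solves `w'' + q w = 0` for
`q(t) = 1 / (4(1+t)²)` and is positive on `(0, ∞)` with `w(0) = 0`. As long as `g` stays positive,
the Wronskian `W = g' w - g w'` vanishes at `0` and has `W' = g'' w + q g w ≥ (q - K) g w ≥ 0`,
so `W ≥ 0`; then `g / w`, whose derivative is `W / w²`, is nondecreasing. Hence `g` cannot reach
a first zero in `(0, ∞)`; it starts out positive because `g(0) = 0` and `g'(0) = 1`.
-/

open Set Filter Topology

theorem pos_of_gt_of_no_first_nonpos {g : ℝ → ℝ} {a : ℝ} (hg : ContinuousOn g (Ioi a))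
    (hnear : ∀ᶠ t in 𝓝[>] a, 0 < g t)
    (hstep : ∀ T > a, (∀ t ∈ Ioo a T, 0 < g t) → 0 < g T) :
    ∀ t > a, 0 < g t := by
  intro t₀ ht₀
  by_contra! hgt₀
  set S := {t | a < t ∧ g t ≤ 0}
  have hSne : S.Nonempty := ⟨t₀, ht₀, hgt₀⟩
  have hSbdd : BddBelow S := ⟨a, fun t ht => ht.1.le⟩
  obtain ⟨c, hac, hc⟩ := mem_nhdsGT_iff_exists_Ioo_subset.mp hnear
  have hcS : c ≤ sInf S := le_csInf hSne fun t ⟨hat, hgt⟩ =>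
    not_lt.mp fun htc => (hgt.trans_lt (hc ⟨hat, htc⟩)).false
  have haS : a < sInf S := hac.trans_le hcS
  have hpos : 0 < g (sInf S) := hstep _ haS fun t ⟨hat, ht⟩ =>
    not_le.mp fun hgt => (csInf_le hSbdd ⟨hat, hgt⟩).not_gt ht
  have hnhds : {t | 0 < g t} ∈ 𝓝 (sInf S) :=
    continuousAt_const.eventually_lt (hg.continuousAt (Ioi_mem_nhds haS)) hpos
  obtain ⟨u, hSu, hu⟩ := exists_Ico_subset_of_mem_nhds hnhds (exists_gt _)
  obtain ⟨t, htS, htu⟩ := exists_lt_of_csInf_lt hSne hSu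
  exact (htS.2.trans_lt (hu ⟨csInf_le hSbdd htS, htu⟩)).false

section SturmComparison

variable {g g' g'' w w' q K : ℝ → ℝ} {a T : ℝ}

theorem sturm_wronskian_nonneg
    (hg : ∀ t ∈ Icc a T, HasDerivAt g (g' t) t) (hg' : ∀ t ∈ Icc a T, HasDerivAt g' (g'' t) t)
    (hw : ∀ t ∈ Icc a T, HasDerivAt w (w' t) t)
    (hw' : ∀ t ∈ Icc a T, HasDerivAt w' (-(q t * w t)) t)
    (hga : g a = 0) (hwa : w a = 0) (hKq : ∀ t ∈ Ioo a T, K t ≤ q t)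
    (hode : ∀ t ∈ Ioo a T, 0 ≤ g'' t + K t * g t)
    (hgpos : ∀ t ∈ Ioo a T, 0 < g t) (hwpos : ∀ t ∈ Ioo a T, 0 < w t) :
    ∀ t ∈ Icc a T, 0 ≤ g' t * w t - g t * w' t := by
  have hderiv : ∀ t ∈ Icc a T, HasDerivAt (fun s => g' s * w s - g s * w' s)
      ((g'' t + q t * g t) * w t) t := fun t ht =>
    (((hg' t ht).mul (hw t ht)).sub ((hg t ht).mul (hw' t ht))).congr_deriv (by ring)
  have hmono : MonotoneOn (fun s => g' s * w s - g s * w' s) (Icc a T) := by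
    refine monotoneOn_of_hasDerivWithinAt_nonneg (convex_Icc a T)
      (fun t ht => (hderiv t ht).continuousAt.continuousWithinAt)
      (fun t ht => (hderiv t (interior_subset ht)).hasDerivWithinAt) fun t ht => ?_
    rw [interior_Icc] at ht
    have hgw : 0 ≤ (q t - K t) * (g t * w t) :=
      mul_nonneg (sub_nonneg.mpr (hKq t ht)) (mul_pos (hgpos t ht) (hwpos t ht)).le
    linear_combination mul_nonneg (hode t ht) (hwpos t ht).le + hgw
  intro t ht
  simpa [hga, hwa] using hmono (left_mem_Icc.mpr (ht.1.trans ht.2)) ht ht.1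

theorem monotoneOn_div_of_wronskian_nonneg {s : ℝ}
    (hg : ∀ t ∈ Icc s T, HasDerivAt g (g' t) t) (hw : ∀ t ∈ Icc s T, HasDerivAt w (w' t) t)
    (hwpos : ∀ t ∈ Icc s T, 0 < w t)
    (hW : ∀ t ∈ Icc s T, 0 ≤ g' t * w t - g t * w' t) :
    MonotoneOn (fun t => g t / w t) (Icc s T) := by
  have hderiv : ∀ t ∈ Icc s T, HasDerivAt (fun t => g t / w t)
      ((g' t * w t - g t * w' t) / w t ^ 2) t := fun t ht =>
    (hg t ht).div (hw t ht) (hwpos t ht).ne'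
  exact monotoneOn_of_hasDerivWithinAt_nonneg (convex_Icc s T)
    (fun t ht => (hderiv t ht).continuousAt.continuousWithinAt)
    (fun t ht => (hderiv t (interior_subset ht)).hasDerivWithinAt)
    fun t ht => div_nonneg (hW t (interior_subset ht)) (sq_nonneg _)

theorem sturm_comparison_pos (haT : a < T)
    (hg : ∀ t ∈ Icc a T, HasDerivAt g (g' t) t) (hg' : ∀ t ∈ Icc a T, HasDerivAt g' (g'' t) t)
    (hw : ∀ t ∈ Icc a T, HasDerivAt w (w' t) t)
    (hw' : ∀ t ∈ Icc a T, HasDerivAt w' (-(q t * w t)) t)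
    (hga : g a = 0) (hwa : w a = 0) (hKq : ∀ t ∈ Ioo a T, K t ≤ q t)
    (hode : ∀ t ∈ Ioo a T, 0 ≤ g'' t + K t * g t)
    (hgpos : ∀ t ∈ Ioo a T, 0 < g t) (hwpos : ∀ t ∈ Ioc a T, 0 < w t) :
    0 < g T := by
  obtain ⟨s, has, hsT⟩ := exists_between haT
  have hsub : Icc s T ⊆ Icc a T := Icc_subset_Icc_left has.le
  have hW := sturm_wronskian_nonneg hg hg' hw hw' hga hwa hKq hode hgpos
    fun t ht => hwpos t (Ioo_subset_Ioc_self ht)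
  have hmono := monotoneOn_div_of_wronskian_nonneg (fun t ht => hg t (hsub ht))
    (fun t ht => hw t (hsub ht)) (fun t ht => hwpos t ⟨has.trans_le ht.1, ht.2⟩)
    fun t ht => hW t (hsub ht)
  have hratio : g s / w s ≤ g T / w T :=
    hmono (left_mem_Icc.mpr hsT.le) (right_mem_Icc.mpr hsT.le) hsT.le
  have hs_pos : 0 < g s / w s := div_pos (hgpos s ⟨has, hsT⟩) (hwpos s ⟨has, hsT.le⟩)
  exact (div_pos_iff_of_pos_right (hwpos T ⟨haT, le_rfl⟩)).mp (hs_pos.trans_le hratio)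

end SturmComparison

noncomputable def sqrtMulLog (t : ℝ) : ℝ := √(1 + t) * Real.log (1 + t)

noncomputable def sqrtMulLogDeriv (t : ℝ) : ℝ := (Real.log (1 + t) + 2) / (2 * √(1 + t))

theorem hasDerivAt_one_add (t : ℝ) : HasDerivAt (fun s : ℝ => 1 + s) 1 t :=
  (hasDerivAt_id' t).const_add 1

section SqrtMulLog

variable {t : ℝ}

theorem hasDerivAt_sqrtMulLog (ht : -1 < t) : HasDerivAt sqrtMulLog (sqrtMulLogDeriv t) t := by
  have hne : 1 + t ≠ 0 := by linarith
  have hpos : 0 < √(1 + t) := Real.sqrt_pos.mpr (by linarith)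
  have hsq : √(1 + t) ^ 2 = 1 + t := Real.sq_sqrt (by linarith)
  refine (((hasDerivAt_one_add t).sqrt hne).mul ((hasDerivAt_one_add t).log hne)).congr_deriv ?_
  rw [sqrtMulLogDeriv]
  field_simp
  linear_combination 2 * hsq

theorem hasDerivAt_sqrtMulLogDeriv (ht : -1 < t) :
    HasDerivAt sqrtMulLogDeriv (-(1 / (4 * (1 + t) ^ 2) * sqrtMulLog t)) t := by
  have hne : 1 + t ≠ 0 := by linarith
  have hpos : 0 < √(1 + t) := Real.sqrt_pos.mpr (by linarith)
  have hsq : √(1 + t) ^ 2 = 1 + t := Real.sq_sqrt (by linarith)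
  refine ((((hasDerivAt_one_add t).log hne).add_const 2).div
    (((hasDerivAt_one_add t).sqrt hne).const_mul 2) (by positivity)).congr_deriv ?_
  rw [sqrtMulLog]
  field_simp
  linear_combination (8 * (1 + t) + 4 * Real.log (1 + t) * (√(1 + t) ^ 2 + (1 + t))) * hsq

theorem sqrtMulLog_pos (ht : 0 < t) : 0 < sqrtMulLog t :=
  mul_pos (Real.sqrt_pos.mpr (by linarith)) (Real.log_pos (by linarith))

end SqrtMulLog

theorem stmt_16 (K g : ℝ → ℝ) (hg : ContDiff ℝ 2 g)
    (hg0 : g 0 = 0) (hg0' : deriv g 0 = 1)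
    (hK : ∀ t > (0 : ℝ), K t ≤ 1 / (4 * (1 + t) ^ 2))
    (hode : ∀ t > (0 : ℝ), deriv (deriv g) t + K t * g t ≥ 0) :
    ∀ t > (0 : ℝ), 0 < g t := by
  have hg₁ : Differentiable ℝ g := hg.differentiable (by norm_num)
  have hg₂ : Differentiable ℝ (deriv g) := hg.differentiable_deriv_two
  have hnear : ∀ᶠ t in 𝓝[>] 0, 0 < g t := by
    filter_upwards [nhdsWithin_le_nhds (eventually_nhdsWithin_sign_eq_of_deriv_pos
      (hg0'.symm ▸ one_pos) hg0), self_mem_nhdsWithin] with t hsign ht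
    rwa [sub_zero, sign_pos (show 0 < t from ht), sign_eq_one_iff] at hsign
  refine pos_of_gt_of_no_first_nonpos hg₁.continuous.continuousOn hnear fun T hT hpos => ?_
  have hm1 : ∀ t ∈ Icc 0 T, -1 < t := fun t ht => by linarith [ht.1]
  exact sturm_comparison_pos hT (fun t _ => (hg₁ t).hasDerivAt) (fun t _ => (hg₂ t).hasDerivAt)
    (fun t ht => hasDerivAt_sqrtMulLog (hm1 t ht))
    (fun t ht => hasDerivAt_sqrtMulLogDeriv (hm1 t ht))
    hg0 (by simp [sqrtMulLog]) (fun t ht => hK t ht.1) (fun t ht => hode t ht.1) hpos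
    fun t ht => sqrtMulLog_pos ht.1
end
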